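/- arXiv:0803.0073 — 3 statements merged into one kernel-verified Lean document; each statement's English description precedes it below -/
import Mathlib

section
/- Under the hypotheses that A^T + {a − T a : a ∈ A} is dense in A and P(n) → 0, the positive projection E_T : A → A^T with E_T ∘ T = T ∘ E_T = E_T is unique: any positive linear projection Ẽ of A onto A^T satisfying Ẽ ∘ T = Ẽ equals E_T. -/
/-!
`Ẽ` is positive, hence continuous, and `T`-invariant, so it takes the value `Ẽ x` on every Riesz
mean of `x`. Passing to the limit gives `Ẽ x = Ẽ (E_T x)`, and `E_T x` is fixed by `T`, so it is
also fixed by `Ẽ`.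
-/

open Filter Topology

lemma continuous_of_map_nonneg {A B : Type*} [NonUnitalCStarAlgebra A] [PartialOrder A]
    [StarOrderedRing A] [NonUnitalCStarAlgebra B] [PartialOrder B] [StarOrderedRing B]
    (f : A →ₗ[ℂ] B) (hf : ∀ a, 0 ≤ a → 0 ≤ f a) : Continuous f :=
  map_continuous (PositiveLinearMap.mk₀ f hf)

lemma Module.End.apply_pow_apply_of_invariant {R M N : Type*} [Semiring R] [AddCommMonoid M]
    [Module R M] {T : Module.End R M} {f : M → N} (hf : ∀ x, f (T x) = f x) (k : ℕ) (x : M) :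
    f ((T ^ k) x) = f x := by
  induction k with
  | zero => rfl
  | succ k ih => rw [pow_succ', Module.End.mul_apply, hf, ih]

lemma LinearMap.map_centerMass {R E F ι : Type*} [Field R] [AddCommGroup E] [AddCommGroup F]
    [Module R E] [Module R F] (f : E →ₗ[R] F) (t : Finset ι) (w : ι → R) (z : ι → E) :
    f (t.centerMass w z) = t.centerMass w (f ∘ z) := by
  simp [Finset.centerMass, map_sum]

lemma LinearMap.map_centerMass_of_forall_eq {R E F ι : Type*} [Field R] [AddCommGroup E]
    [AddCommGroup F] [Module R E] [Module R F] (f : E →ₗ[R] F) {t : Finset ι} {w : ι → R}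
    (hw : ∑ i ∈ t, w i ≠ 0) {z : ι → E} {c : F} (hz : ∀ i, f (z i) = c) :
    f (t.centerMass w z) = c := by
  rw [f.map_centerMass, show f ∘ z = Function.const ι c from funext hz, t.centerMass_const hw]

theorem invariant_projection_unique_general {A : Type*} [CStarAlgebra A] [PartialOrder A]
    [StarOrderedRing A]
    (T : A →ₗ[ℂ] A)
    (p : ℕ → ℝ) (hp1 : 0 < p 1) (hpnonneg : ∀ k, 0 ≤ p k)
    (E : A →L[ℂ] A)
    (hE : ∀ x, Tendsto (fun n : ℕ =>
        (∑ k ∈ Finset.Icc 1 n, p k)⁻¹ • ∑ k ∈ Finset.Icc 1 n, p k • (T ^ k) x)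
      atTop (nhds (E x)))
    (hErange : ∀ x, T (E x) = E x)
    (Etilde : A →ₗ[ℂ] A) (hEtpos : ∀ a : A, 0 ≤ a → 0 ≤ Etilde a)
    (hEtfix : ∀ x, T x = x → Etilde x = x)
    (hEtinv : ∀ x, Etilde (T x) = Etilde x) :
    ∀ x, Etilde x = E x := by
  intro x
  have hmean : (fun n => Etilde ((Finset.Icc 1 n).centerMass p fun k => (T ^ k) x))
      =ᶠ[atTop] fun _ => Etilde x := by
    filter_upwards [eventually_ge_atTop 1] with n hn
    have hsum : ∑ k ∈ Finset.Icc 1 n, p k ≠ 0 :=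
      (hp1.trans_le <| Finset.single_le_sum (fun k _ => hpnonneg k)
        (Finset.mem_Icc.2 ⟨le_rfl, hn⟩)).ne'
    exact (Etilde.restrictScalars ℝ).map_centerMass_of_forall_eq hsum
      (Module.End.apply_pow_apply_of_invariant hEtinv · x)
  have hlim : Tendsto (fun n => Etilde ((Finset.Icc 1 n).centerMass p fun k => (T ^ k) x))
      atTop (𝓝 (Etilde (E x))) :=
    ((continuous_of_map_nonneg Etilde hEtpos).tendsto _).comp (hE x)
  calc Etilde x = Etilde (E x) := tendsto_nhds_unique tendsto_const_nhds (hlim.congr' hmean)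
    _ = E x := hEtfix _ (hErange x)

/-- Under the density and `P(n) → 0` hypotheses, the projection `E_T` obtained as the norm
limit of the Riesz means of the iterates of `T` is the unique positive `T`-invariant
projection onto the fixed point subspace: any positive linear projection `Ẽ` of `A` onto
`A^T` with `Ẽ ∘ T = Ẽ` equals `E_T`. -/
theorem invariant_projection_unique {A : Type*} [CStarAlgebra A] [PartialOrder A]
    [StarOrderedRing A]
    (T : A →ₗ[ℂ] A) (hTpos : ∀ a : A, 0 ≤ a → 0 ≤ T a) (hT1 : T 1 = 1)
    (p : ℕ → ℝ) (hp1 : 0 < p 1) (hpnonneg : ∀ k, 0 ≤ p k)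
    (hP : Tendsto (fun n : ℕ =>
        (p 1 + ∑ k ∈ Finset.Icc 2 n, |p k - p (k - 1)| + p n) /
          ∑ k ∈ Finset.Icc 1 n, p k) atTop (nhds 0))
    (hdense : Dense {y : A | ∃ f, T f = f ∧ ∃ a, y = f + (a - T a)})
    (E : A →L[ℂ] A)
    (hE : ∀ x, Tendsto (fun n : ℕ =>
        (∑ k ∈ Finset.Icc 1 n, p k)⁻¹ • ∑ k ∈ Finset.Icc 1 n, p k • (T ^ k) x)
      atTop (nhds (E x)))
    (hErange : ∀ x, T (E x) = E x) (hEfix : ∀ x, T x = x → E x = x)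
    (Etilde : A →ₗ[ℂ] A) (hEtpos : ∀ a : A, 0 ≤ a → 0 ≤ Etilde a)
    (hEtrange : ∀ x, T (Etilde x) = Etilde x) (hEtfix : ∀ x, T x = x → Etilde x = x)
    (hEtinv : ∀ x, Etilde (T x) = Etilde x) :
    ∀ x, Etilde x = E x :=
  invariant_projection_unique_general T p hp1 hpnonneg E hE hErange Etilde hEtpos hEtfix hEtinv
end

section
/- Let Π be a d × d stochastic matrix and Ψ the associated diagonal-entangled Markov operator on M_d(ℂ) (Ψ(x)_{ii} = ∑_{k,l} √(p_{ik} p_{il}) x_{kl}, off-diagonal entries 0). Then M_d(ℂ)^Ψ + {x − Ψ(x) : x ∈ M_d(ℂ)} = M_d(ℂ); i.e. every matrix x decomposes as x = x_ψ + (y − Ψ y) with x_ψ = diag(ψ) for some ψ with Π ψ = ψ and some y ∈ M_d(ℂ). -/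
/-!
The off-diagonal part of `x - Ψ x` is that of `x`, and on diagonal matrices `Ψ` acts as `Π`:
`Ψ (diagonal ξ) = diagonal (Π ξ)`. Taking `y = x + diagonal ξ`, the claim reduces to writing the
diagonal of `Ψ x` as `ψ + (ξ - Π ξ)` with `Π ψ = ψ`, i.e. to `ker (1 - Π) ⊔ range (1 - Π) = ⊤`.
This holds because `Π` is a contraction for the sup norm: if `v = w - Π w` is fixed by `Π`, then
`Π ^ n w = w - n • v` stays bounded, forcing `v = 0`; a dimension count then turns disjointness into
spanning.
-/

open Matrix Finset LinearMap

section Contraction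

variable {𝕜 E : Type*} [RCLike 𝕜] [NormedAddCommGroup E] [NormedSpace 𝕜 E]

theorem norm_pow_apply_le_of_norm_map_le {T : E →ₗ[𝕜] E} (hT : ∀ v, ‖T v‖ ≤ ‖v‖) (n : ℕ)
    (v : E) : ‖(T ^ n) v‖ ≤ ‖v‖ := by
  induction n with
  | zero => simp
  | succ n ih =>
    rw [pow_succ', Module.End.mul_apply]
    exact (hT _).trans ih

theorem disjoint_ker_range_one_sub_of_norm_map_le {T : E →ₗ[𝕜] E} (hT : ∀ v, ‖T v‖ ≤ ‖v‖) :
    Disjoint (ker (1 - T)) (range (1 - T)) := by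
  refine Submodule.disjoint_def.mpr ?_
  rintro _ hfix ⟨w, rfl⟩
  set v := (1 - T) w with hv
  have hTv : T v = v := (sub_eq_zero.mp (mem_ker.mp hfix)).symm
  have hTw : T w = w - v := by simp [hv]
  have hiter : ∀ n : ℕ, (T ^ n) w = w - n • v := by
    intro n
    induction n with
    | zero => simp
    | succ n ih => rw [pow_succ', Module.End.mul_apply, ih, map_sub, map_nsmul, hTv, hTw]; module
  have hbound : ∀ n : ℕ, n * ‖v‖ ≤ 2 * ‖w‖ := fun n => calc
    n * ‖v‖ = ‖w - (T ^ n) w‖ := by rw [hiter, sub_sub_cancel, RCLike.norm_nsmul 𝕜, nsmul_eq_mul]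
    _ ≤ ‖w‖ + ‖(T ^ n) w‖ := norm_sub_le _ _
    _ ≤ 2 * ‖w‖ := by linarith [norm_pow_apply_le_of_norm_map_le hT n w]
  by_contra hne
  have hpos : 0 < ‖v‖ := norm_pos_iff.mpr hne
  obtain ⟨n, hn⟩ := exists_nat_gt (2 * ‖w‖ / ‖v‖)
  linarith [hbound n, (div_lt_iff₀ hpos).mp hn]

theorem ker_sup_range_one_sub_eq_top_of_norm_map_le [FiniteDimensional 𝕜 E] {T : E →ₗ[𝕜] E}
    (hT : ∀ v, ‖T v‖ ≤ ‖v‖) : ker (1 - T) ⊔ range (1 - T) = ⊤ :=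
  Submodule.eq_top_of_disjoint _ _ (by rw [add_comm, finrank_range_add_finrank_ker])
    (disjoint_ker_range_one_sub_of_norm_map_le hT)

end Contraction

section Stochastic

variable {n : Type*} [Fintype n] {P : Matrix n n ℝ}

theorem norm_map_ofReal_mulVec_le (hnonneg : ∀ i j, 0 ≤ P i j) (hrow : ∀ i, ∑ j, P i j = 1)
    (v : n → ℂ) : ‖(P.map Complex.ofReal) *ᵥ v‖ ≤ ‖v‖ := by
  refine (pi_norm_le_iff_of_nonneg (norm_nonneg v)).mpr fun i => ?_
  calc ‖∑ j, (P i j : ℂ) * v j‖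
      ≤ ∑ j, P i j * ‖v j‖ := by
        refine (norm_sum_le _ _).trans_eq (sum_congr rfl fun j _ => ?_)
        rw [norm_mul, Complex.norm_real, Real.norm_of_nonneg (hnonneg i j)]
    _ ≤ ∑ j, P i j * ‖v‖ := by gcongr with j; exacts [hnonneg i j, norm_le_pi_norm v j]
    _ = ‖v‖ := by rw [← sum_mul, hrow, one_mul]

theorem ker_sup_range_one_sub_stochastic_eq_top (hnonneg : ∀ i j, 0 ≤ P i j)
    (hrow : ∀ i, ∑ j, P i j = 1) :
    ker (1 - (P.map Complex.ofReal).mulVecLin) ⊔ range (1 - (P.map Complex.ofReal).mulVecLin)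
      = ⊤ :=
  ker_sup_range_one_sub_eq_top_of_norm_map_le (norm_map_ofReal_mulVec_le hnonneg hrow)

end Stochastic

theorem exists_fixed_diagonal_add_sub_of_ker_sup_range {R n : Type*} [CommRing R] [Fintype n]
    [DecidableEq n] (A : Matrix n n R) (Ψ : Matrix n n R → Matrix n n R)
    (hΨ_add : ∀ x ξ, Ψ (x + diagonal ξ) = Ψ x + diagonal (A *ᵥ ξ))
    (hΨ_diag : ∀ x, (Ψ x).IsDiag)
    (hA : ker (1 - A.mulVecLin) ⊔ range (1 - A.mulVecLin) = ⊤) (x : Matrix n n R) :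
    ∃ (ψ : n → R) (y : Matrix n n R), A *ᵥ ψ = ψ ∧ x = diagonal ψ + (y - Ψ y) := by
  obtain ⟨ψ, hψ, _, ⟨ξ, rfl⟩, hsum⟩ :=
    Submodule.mem_sup.mp (hA ▸ Submodule.mem_top : diag (Ψ x) ∈ _)
  refine ⟨ψ, x + diagonal ξ, (sub_eq_zero.mp (mem_ker.mp hψ)).symm, ?_⟩
  have hΨx : Ψ x = diagonal ψ + (diagonal ξ - diagonal (A *ᵥ ξ)) := by
    rw [← (hΨ_diag x).diagonal_diag, ← hsum, diagonal_sub, diagonal_add]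
    simp
  rw [hΨ_add, hΨx]
  abel

theorem entangled_apply_add_diagonal {n : Type*} [Fintype n] [DecidableEq n]
    {P : Matrix n n ℝ} (hnonneg : ∀ i j, 0 ≤ P i j)
    (Ψ : Matrix n n ℂ → Matrix n n ℂ)
    (hΨ : ∀ x i j, Ψ x i j =
      if i = j then ∑ k, ∑ l, (Real.sqrt (P i k * P i l) : ℂ) * x k l else 0)
    (x : Matrix n n ℂ) (ξ : n → ℂ) :
    Ψ (x + diagonal ξ) = Ψ x + diagonal ((P.map Complex.ofReal) *ᵥ ξ) := by
  ext i j
  rw [Matrix.add_apply, hΨ, hΨ, diagonal_apply]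
  split_ifs with hij
  · subst hij
    simp only [Matrix.add_apply, mul_add, sum_add_distrib, add_right_inj]
    simp [diagonal_apply, mulVec, dotProduct, Real.sqrt_mul_self (hnonneg i _)]
  · rw [add_zero]

/-- For the diagonal-entangled Markov operator `Ψ` associated to a stochastic matrix `Pmat`,
every matrix `x` decomposes as `x = diag ψ + (y - Ψ y)` with `Pmat ψ = ψ`; that is,
`M_d(ℂ)^Ψ + {x - Ψ x} = M_d(ℂ)`. -/
theorem entangled_markov_decomposition (d : ℕ) (Pmat : Matrix (Fin d) (Fin d) ℝ)
    (hnonneg : ∀ i j, 0 ≤ Pmat i j) (hrow : ∀ i, ∑ j, Pmat i j = 1)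
    (Ψ : Matrix (Fin d) (Fin d) ℂ → Matrix (Fin d) (Fin d) ℂ)
    (hΨ : ∀ x i j, Ψ x i j =
      if i = j then ∑ k, ∑ l, (Real.sqrt (Pmat i k * Pmat i l) : ℂ) * x k l else 0) :
    ∀ x : Matrix (Fin d) (Fin d) ℂ, ∃ (ψ : Fin d → ℂ) (y : Matrix (Fin d) (Fin d) ℂ),
      (Pmat.map (Complex.ofReal)).mulVec ψ = ψ ∧
      x = Matrix.diagonal ψ + (y - Ψ y) :=
  exists_fixed_diagonal_add_sub_of_ker_sup_range _ Ψ (entangled_apply_add_diagonal hnonneg Ψ hΨ)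
    (fun x i j hij => (hΨ x i j).trans (if_neg hij))
    (ker_sup_range_one_sub_stochastic_eq_top hnonneg hrow)
end

section
/- Let Π₀ = [[1,0,0],[0,0,1],[0,u,v]] with u,v ≥ 0, u + v = 1, u > 0, and let Ψ₀ be the associated diagonal-entangled Markov operator on M₃(ℂ). Then the fixed point subspace M₃(ℂ)^{Ψ₀} = {diag(x, y, y) : x, y ∈ ℂ} is a 2-dimensional commutative unital *-subalgebra of M₃(ℂ); in particular Ψ₀ admits more than one invariant state, so Ψ₀ is not uniquely ergodic (not ergodic), even though M₃(ℂ)^{Ψ₀} + {x − Ψ₀ x} = M₃(ℂ). -/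
/-!
`Ψ x` is the diagonal matrix whose `i`-th entry is the quadratic form of `x` at the entrywise
square root of the `i`-th row of `P`, and `Ψ (diagonal ψ) = diagonal (P ψ)`. Hence the fixed points
of `Ψ` are the diagonal matrices `diagonal ψ` with `P ψ = ψ`, and for every left-invariant
probability vector `μ` the functional `x ↦ ∑ μᵢ (Ψ x)ᵢᵢ` is a `Ψ`-invariant state, which remembers
`μ`. For `Π₀` the fixed vectors are `(a, b, b)`, while both `e₀` and `(0, u, 1) / (1 + u)` are
stationary, giving two distinct invariant states.
-/

open scoped ComplexOrder

open Matrix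

section EntangledMarkov

variable {n : Type*} [Fintype n] [DecidableEq n]

noncomputable def entangledMarkov (P : Matrix n n ℝ) : Matrix n n ℂ →ₗ[ℂ] Matrix n n ℂ where
  toFun x := diagonal fun i => ∑ k, ∑ l, (√(P i k * P i l) : ℂ) * x k l
  map_add' x y := by
    rw [diagonal_add]
    congr 1
    funext i
    simp only [Matrix.add_apply, mul_add, Finset.sum_add_distrib]
  map_smul' c x := by
    rw [RingHom.id_apply, ← diagonal_smul]
    congr 1
    funext i
    simp only [Matrix.smul_apply, smul_eq_mul, mul_left_comm _ c, Finset.mul_sum, Pi.smul_apply]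

theorem entangledMarkov_apply (P : Matrix n n ℝ) (x : Matrix n n ℂ) :
    entangledMarkov P x = diagonal fun i => ∑ k, ∑ l, (√(P i k * P i l) : ℂ) * x k l :=
  rfl

theorem diagonal_diag_entangledMarkov (P : Matrix n n ℝ) (x : Matrix n n ℂ) :
    diagonal (entangledMarkov P x).diag = entangledMarkov P x := by
  rw [entangledMarkov_apply, diag_diagonal]

variable {P : Matrix n n ℝ}

theorem entangledMarkov_diagonal (hP : ∀ i j, 0 ≤ P i j) (d : n → ℂ) :
    entangledMarkov P (diagonal d) = diagonal (P.map (↑) *ᵥ d) := by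
  rw [entangledMarkov_apply]
  congr 1
  funext i
  simp only [diagonal_apply, mul_ite, mul_zero, Finset.sum_ite_eq, Finset.mem_univ, if_true,
    Real.sqrt_mul_self (hP i _), mulVec, dotProduct, map_apply]

/-- `(Ψ x)ᵢᵢ` is the quadratic form of `x` at the entrywise square root of the `i`-th row of `P`. -/
theorem entangledMarkov_apply_self_nonneg (hP : ∀ i j, 0 ≤ P i j) {x : Matrix n n ℂ}
    (hx : x.PosSemidef) (i : n) : 0 ≤ entangledMarkov P x i i := by
  set r : n → ℂ := fun k => (√(P i k) : ℂ)
  have hr : star r = r := funext fun k => Complex.conj_ofReal _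
  have hquad : entangledMarkov P x i i = star r ⬝ᵥ (x *ᵥ r) := by
    simp only [entangledMarkov_apply, diagonal_apply_eq, hr, dotProduct, mulVec, Finset.mul_sum,
      Real.sqrt_mul (hP i _), Complex.ofReal_mul, r]
    exact Finset.sum_congr rfl fun k _ => Finset.sum_congr rfl fun l _ => by ring
  exact hquad ▸ hx.dotProduct_mulVec_nonneg r

theorem entangledMarkov_eq_self_iff (hP : ∀ i j, 0 ≤ P i j) {x : Matrix n n ℂ} :
    entangledMarkov P x = x ↔ ∃ d, P.map (↑) *ᵥ d = d ∧ x = diagonal d := by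
  constructor
  · intro hx
    refine ⟨(entangledMarkov P x).diag, diagonal_injective ?_, ?_⟩
    · rw [← entangledMarkov_diagonal hP, diagonal_diag_entangledMarkov, hx, hx]
    · rw [diagonal_diag_entangledMarkov, hx]
  · rintro ⟨d, hd, rfl⟩
    rw [entangledMarkov_diagonal hP, hd]

/-- `Ψ` maps the off-diagonal part of `x` to a diagonal matrix, so `x` decomposes as soon as its
diagonal does. -/
theorem exists_diagonal_add_sub_entangledMarkov (hP : ∀ i j, 0 ≤ P i j)
    {p : (n → ℂ) → Prop} (h : ∀ d : n → ℂ, ∃ f w, p f ∧ d = f + (w - P.map (↑) *ᵥ w))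
    (x : Matrix n n ℂ) : ∃ f y, p f ∧ x = diagonal f + (y - entangledMarkov P y) := by
  set o := x - diagonal x.diag
  obtain ⟨f, w, hf, hd⟩ := h (x.diag + (entangledMarkov P o).diag)
  refine ⟨f, o + diagonal w, hf, ?_⟩
  have hsplit : diagonal f = diagonal x.diag + entangledMarkov P o -
      (diagonal w - diagonal (P.map (↑) *ᵥ w)) := by
    conv_rhs => rw [← diagonal_diag_entangledMarkov P o]
    simp only [eq_sub_of_add_eq hd.symm, diagonal_sub, diagonal_add]
    rfl
  rw [map_add, entangledMarkov_diagonal hP, hsplit]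
  simp only [o]
  abel

noncomputable def entangledMarkovState (P : Matrix n n ℝ) (μ : n → ℝ) :
    Matrix n n ℂ →ₗ[ℂ] ℂ where
  toFun x := (↑) ∘ μ ⬝ᵥ (entangledMarkov P x).diag
  map_add' x y := by rw [map_add, diag_add, dotProduct_add]
  map_smul' c x := by rw [map_smul, diag_smul, dotProduct_smul]; rfl

theorem entangledMarkovState_apply (P : Matrix n n ℝ) (μ : n → ℝ) (x : Matrix n n ℂ) :
    entangledMarkovState P μ x = ∑ i, (μ i : ℂ) * entangledMarkov P x i i :=
  rfl

variable {μ : n → ℝ}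

theorem entangledMarkovState_diagonal (hP : ∀ i j, 0 ≤ P i j) (hμP : μ ᵥ* P = μ) (d : n → ℂ) :
    entangledMarkovState P μ (diagonal d) = (↑) ∘ μ ⬝ᵥ d := by
  change (↑) ∘ μ ⬝ᵥ (entangledMarkov P (diagonal d)).diag = _
  rw [entangledMarkov_diagonal hP, diag_diagonal, dotProduct_mulVec]
  congr 1
  funext k
  have hk := (RingHom.map_vecMul Complex.ofRealHom P μ k).symm
  rw [hμP] at hk
  exact hk

theorem entangledMarkovState_one (hP : P ∈ rowStochastic ℝ n) (hμ : μ ∈ stdSimplex ℝ n) :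
    entangledMarkovState P μ 1 = 1 := by
  have hP1 : P.map (↑) *ᵥ (1 : n → ℂ) = 1 := by
    funext i
    simp only [mulVec, dotProduct, map_apply, Pi.one_apply, mul_one]
    exact_mod_cast sum_row_of_mem_rowStochastic hP i
  change (↑) ∘ μ ⬝ᵥ (entangledMarkov P (diagonal 1)).diag = 1
  rw [entangledMarkov_diagonal fun i j => nonneg_of_mem_rowStochastic hP, diag_diagonal, hP1,
    dotProduct_one]
  simp only [Function.comp_apply]
  exact_mod_cast hμ.2

theorem entangledMarkovState_nonneg (hP : ∀ i j, 0 ≤ P i j) (hμ : ∀ i, 0 ≤ μ i)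
    {x : Matrix n n ℂ} (hx : x.PosSemidef) : 0 ≤ entangledMarkovState P μ x := by
  rw [entangledMarkovState_apply]
  exact Finset.sum_nonneg fun i _ =>
    mul_nonneg (Complex.zero_le_real.mpr (hμ i)) (entangledMarkov_apply_self_nonneg hP hx i)

theorem entangledMarkovState_entangledMarkov (hP : ∀ i j, 0 ≤ P i j) (hμP : μ ᵥ* P = μ)
    (x : Matrix n n ℂ) :
    entangledMarkovState P μ (entangledMarkov P x) = entangledMarkovState P μ x := by
  rw [← diagonal_diag_entangledMarkov P x, entangledMarkovState_diagonal hP hμP]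
  rfl

theorem eq_of_entangledMarkovState_eq (hP : ∀ i j, 0 ≤ P i j) {ν : n → ℝ}
    (hμP : μ ᵥ* P = μ) (hνP : ν ᵥ* P = ν)
    (h : entangledMarkovState P μ = entangledMarkovState P ν) : μ = ν := by
  funext i
  have hi := congr($h (diagonal (Pi.single i 1)))
  simpa [entangledMarkovState_diagonal hP, hμP, hνP, dotProduct_single] using hi

end EntangledMarkov

section ThreeStates

def P₀ (u v : ℝ) : Matrix (Fin 3) (Fin 3) ℝ := !![1, 0, 0; 0, 0, 1; 0, u, v]

/-- The stationary distribution of `P₀ u v` supported on the closed class `{1, 2}`. -/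
noncomputable def stationaryOnTail (u : ℝ) : Fin 3 → ℝ := ![0, u / (1 + u), 1 / (1 + u)]

variable {u v : ℝ}

theorem P₀_mem_rowStochastic (hu : 0 ≤ u) (hv : 0 ≤ v) (huv : u + v = 1) :
    P₀ u v ∈ rowStochastic ℝ (Fin 3) := by
  refine mem_rowStochastic_iff_sum.2 ⟨fun i j => ?_, fun i => ?_⟩ <;>
    fin_cases i <;> try fin_cases j
  all_goals simp [P₀, Fin.sum_univ_three, hu, hv, huv]

theorem P₀_mulVec (f : Fin 3 → ℂ) :
    (P₀ u v).map (↑) *ᵥ f = ![f 0, f 2, u * f 1 + v * f 2] := by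
  funext i
  fin_cases i <;> simp [P₀, mulVec, dotProduct, Fin.sum_univ_three]

theorem P₀_mulVec_eq_self_iff (huv : u + v = 1) {f : Fin 3 → ℂ} :
    (P₀ u v).map (↑) *ᵥ f = f ↔ ∃ a b, f = ![a, b, b] := by
  obtain rfl : v = 1 - u := by linarith
  rw [P₀_mulVec]
  constructor
  · intro hf
    have h21 : f 2 = f 1 := congr_fun hf 1
    refine ⟨f 0, f 1, funext fun i => ?_⟩
    fin_cases i <;> simp [h21]
  · rintro ⟨a, b, rfl⟩
    funext i
    fin_cases i <;> simp
    ring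

/-- `w - P₀ w = (0, t, -u t)` for `w = (0, t, 0)`; since `1 + u ≠ 0` these vectors
complement the fixed vectors `(a, b, b)`. -/
theorem exists_eq_add_sub_P₀_mulVec (hu : 0 ≤ u) (huv : u + v = 1) (d : Fin 3 → ℂ) :
    ∃ f w, (∃ a b, f = ![a, b, b]) ∧ d = f + (w - (P₀ u v).map (↑) *ᵥ w) := by
  obtain rfl : v = 1 - u := by linarith
  have hu' : (1 + u : ℂ) ≠ 0 := by exact_mod_cast (by positivity : (1 + u : ℝ) ≠ 0)
  set t := (d 1 - d 2) / (1 + u)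
  refine ⟨![d 0, d 1 - t, d 1 - t], ![0, t, 0], ⟨_, _, rfl⟩, ?_⟩
  rw [P₀_mulVec]
  funext i
  fin_cases i <;> simp [t]
  field_simp
  ring

theorem stationaryOnTail_mem_stdSimplex (hu : 0 ≤ u) :
    stationaryOnTail u ∈ stdSimplex ℝ (Fin 3) := by
  refine ⟨fun i => ?_, ?_⟩
  · fin_cases i <;> simp [stationaryOnTail] <;> positivity
  · simp [stationaryOnTail, Fin.sum_univ_three]
    field_simp
    ring

theorem stationaryOnTail_vecMul_P₀ (hu : 0 ≤ u) (huv : u + v = 1) :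
    stationaryOnTail u ᵥ* P₀ u v = stationaryOnTail u := by
  funext i
  obtain rfl : v = 1 - u := by linarith
  fin_cases i <;> simp [stationaryOnTail, P₀, vecMul, dotProduct, Fin.sum_univ_three]
  field_simp
  ring

theorem single_zero_vecMul_P₀ : Pi.single 0 1 ᵥ* P₀ u v = Pi.single 0 1 := by
  rw [single_one_vecMul]
  funext j
  fin_cases j <;> rfl

theorem entangledMarkov_P₀_eq_self_iff (hu : 0 ≤ u) (hv : 0 ≤ v) (huv : u + v = 1)
    {x : Matrix (Fin 3) (Fin 3) ℂ} :
    entangledMarkov (P₀ u v) x = x ↔ ∃ a b, x = diagonal ![a, b, b] := by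
  rw [entangledMarkov_eq_self_iff fun i j =>
    nonneg_of_mem_rowStochastic (P₀_mem_rowStochastic hu hv huv)]
  simp only [P₀_mulVec_eq_self_iff huv]
  constructor
  · rintro ⟨_, ⟨a, b, rfl⟩, rfl⟩
    exact ⟨a, b, rfl⟩
  · rintro ⟨a, b, rfl⟩
    exact ⟨_, ⟨a, b, rfl⟩, rfl⟩

end ThreeStates

theorem entangled_markov_uniquely_ergodic_relative_not_ergodic_general
    (u v : ℝ) (hu : 0 ≤ u) (hv : 0 ≤ v) (huv : u + v = 1)
    (P0 : Matrix (Fin 3) (Fin 3) ℝ)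
    (hP0 : P0 = Matrix.of ![![1, 0, 0], ![0, 0, 1], ![0, u, v]])
    (Ψ : Matrix (Fin 3) (Fin 3) ℂ → Matrix (Fin 3) (Fin 3) ℂ)
    (hΨ : ∀ x i j, Ψ x i j =
      if i = j then ∑ k, ∑ l, (Real.sqrt (P0 i k * P0 i l) : ℂ) * x k l else 0) :
    (∀ x : Matrix (Fin 3) (Fin 3) ℂ, Ψ x = x ↔
      ∃ a b : ℂ, x = Matrix.diagonal ![a, b, b]) ∧
    (∀ a b a' b' : ℂ,
      Matrix.diagonal ![a, b, b] * Matrix.diagonal ![a', b', b'] =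
        Matrix.diagonal ![a * a', b * b', b * b'] ∧
      Matrix.diagonal ![a, b, b] * Matrix.diagonal ![a', b', b'] =
        Matrix.diagonal ![a', b', b'] * Matrix.diagonal ![a, b, b] ∧
      star (Matrix.diagonal ![a, b, b]) =
        Matrix.diagonal ![star a, star b, star b]) ∧
    ((1 : Matrix (Fin 3) (Fin 3) ℂ) = Matrix.diagonal ![1, 1, 1]) ∧
    (∀ x : Matrix (Fin 3) (Fin 3) ℂ, ∃ (a b : ℂ) (y : Matrix (Fin 3) (Fin 3) ℂ),
      x = Matrix.diagonal ![a, b, b] + (y - Ψ y)) ∧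
    (∃ φ₁ φ₂ : Matrix (Fin 3) (Fin 3) ℂ →ₗ[ℂ] ℂ,
      φ₁ 1 = 1 ∧ φ₂ 1 = 1 ∧
      (∀ x, x.PosSemidef → 0 ≤ φ₁ x) ∧ (∀ x, x.PosSemidef → 0 ≤ φ₂ x) ∧
      (∀ x, φ₁ (Ψ x) = φ₁ x) ∧ (∀ x, φ₂ (Ψ x) = φ₂ x) ∧
      φ₁ ≠ φ₂) := by
  obtain rfl : P0 = P₀ u v := hP0
  obtain rfl : Ψ = entangledMarkov (P₀ u v) :=
    funext fun x => ext fun i j => by rw [hΨ, entangledMarkov_apply, diagonal_apply]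
  have hP := P₀_mem_rowStochastic hu hv huv
  have hPnn : ∀ i j, 0 ≤ P₀ u v i j := fun i j => nonneg_of_mem_rowStochastic hP
  have hμ₁ := single_mem_stdSimplex ℝ (0 : Fin 3)
  have hμ₂ := stationaryOnTail_mem_stdSimplex hu
  have hμ₁P := single_zero_vecMul_P₀ (u := u) (v := v)
  have hμ₂P := stationaryOnTail_vecMul_P₀ hu huv
  refine ⟨fun _ => entangledMarkov_P₀_eq_self_iff hu hv huv,
    fun a b a' b' => ⟨?_, commute_diagonal _ _, ?_⟩, ?_, fun x => ?_,
    ⟨_, _, entangledMarkovState_one hP hμ₁, entangledMarkovState_one hP hμ₂,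
      fun _ => entangledMarkovState_nonneg hPnn hμ₁.1,
      fun _ => entangledMarkovState_nonneg hPnn hμ₂.1,
      entangledMarkovState_entangledMarkov hPnn hμ₁P,
      entangledMarkovState_entangledMarkov hPnn hμ₂P,
      fun h => ?_⟩⟩
  · rw [diagonal_mul_diagonal]
    exact congrArg diagonal (funext fun i => by fin_cases i <;> rfl)
  · rw [star_eq_conjTranspose, diagonal_conjTranspose]
    exact congrArg diagonal (funext fun i => by fin_cases i <;> rfl)
  · rw [← diagonal_one]
    exact congrArg diagonal (funext fun i => by fin_cases i <;> rfl)
  · obtain ⟨_, y, ⟨a, b, rfl⟩, hx⟩ :=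
      exists_diagonal_add_sub_entangledMarkov hPnn (exists_eq_add_sub_P₀_mulVec hu huv) x
    exact ⟨a, b, y, hx⟩
  · have h0 := congr_fun (eq_of_entangledMarkovState_eq hPnn hμ₁P hμ₂P h) 0
    simp [stationaryOnTail] at h0

/-- For `Π₀ = [[1,0,0],[0,0,1],[0,u,v]]` (`u,v ≥ 0`, `u+v=1`, `u>0`) and the associated
diagonal-entangled Markov operator `Ψ₀` on `M₃(ℂ)`, the fixed point subspace is
`{diag(x,y,y)}`, a commutative unital *-subalgebra; `M₃(ℂ)^{Ψ₀} + {x - Ψ₀ x} = M₃(ℂ)`, yet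
`Ψ₀` admits two distinct invariant states, hence is not uniquely ergodic (not ergodic). -/
theorem entangled_markov_uniquely_ergodic_relative_not_ergodic
    (u v : ℝ) (hu : 0 ≤ u) (hv : 0 ≤ v) (huv : u + v = 1) (hupos : 0 < u)
    (P0 : Matrix (Fin 3) (Fin 3) ℝ)
    (hP0 : P0 = Matrix.of ![![1, 0, 0], ![0, 0, 1], ![0, u, v]])
    (Ψ : Matrix (Fin 3) (Fin 3) ℂ → Matrix (Fin 3) (Fin 3) ℂ)
    (hΨ : ∀ x i j, Ψ x i j =
      if i = j then ∑ k, ∑ l, (Real.sqrt (P0 i k * P0 i l) : ℂ) * x k l else 0) :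
    (∀ x : Matrix (Fin 3) (Fin 3) ℂ, Ψ x = x ↔
      ∃ a b : ℂ, x = Matrix.diagonal ![a, b, b]) ∧
    (∀ a b a' b' : ℂ,
      Matrix.diagonal ![a, b, b] * Matrix.diagonal ![a', b', b'] =
        Matrix.diagonal ![a * a', b * b', b * b'] ∧
      Matrix.diagonal ![a, b, b] * Matrix.diagonal ![a', b', b'] =
        Matrix.diagonal ![a', b', b'] * Matrix.diagonal ![a, b, b] ∧
      star (Matrix.diagonal ![a, b, b]) =
        Matrix.diagonal ![star a, star b, star b]) ∧
    ((1 : Matrix (Fin 3) (Fin 3) ℂ) = Matrix.diagonal ![1, 1, 1]) ∧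
    (∀ x : Matrix (Fin 3) (Fin 3) ℂ, ∃ (a b : ℂ) (y : Matrix (Fin 3) (Fin 3) ℂ),
      x = Matrix.diagonal ![a, b, b] + (y - Ψ y)) ∧
    (∃ φ₁ φ₂ : Matrix (Fin 3) (Fin 3) ℂ →ₗ[ℂ] ℂ,
      φ₁ 1 = 1 ∧ φ₂ 1 = 1 ∧
      (∀ x, x.PosSemidef → 0 ≤ φ₁ x) ∧ (∀ x, x.PosSemidef → 0 ≤ φ₂ x) ∧
      (∀ x, φ₁ (Ψ x) = φ₁ x) ∧ (∀ x, φ₂ (Ψ x) = φ₂ x) ∧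
      φ₁ ≠ φ₂) :=
  entangled_markov_uniquely_ergodic_relative_not_ergodic_general u v hu hv huv P0 hP0 Ψ hΨ
end
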